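/- arXiv:1408.3708 — 4 statements merged into one kernel-verified Lean document; each statement's English description precedes it below -/
import Mathlib

section
/- Let N ≥ 1 and r ≥ 1 be integers. Define polynomials A_r^{(N)}(i; s) ∈ ℚ[s] (for 0 ≤ i ≤ r − 1) by the recurrence A_1^{(N)}(0; s) = 1 and, for r ≥ 2, A_r^{(N)}(i; s) = ((s − 1)/(r − 1))·A_{r−1}^{(N)}(i; s − N) + A_{r−1}^{(N)}(i − 1; s − N + 1), where A_r^{(N)}(i; s) is defined to be 0 for i ≤ −1 and for i ≥ r. Then for every integer n ≥ r − 1, ∑_{i₁,…,i_r ≥ 0, i₁+⋯+i_r = n} (n!/(i₁!⋯i_r!)) B_{N,i₁} ⋯ B_{N,i_r} = (1/N^{r−1}) ∑_{i=0}^{r−1} A_r^{(N)}(i; 1 + N(r−1) − n) · (−1)^i · C(n, i) · i! · B_{N,n−i}. -/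
/-!
Write `c n = B_{N,n}(0) / n!` and `F = ∑ c n tⁿ`, so that
`N! · F · (eᵗ - T_{N-1}(t)) = t^N`. Differentiating this identity and eliminating
`eᵗ - T_{N-1}(t)` gives the Riccati equation `t F' = N F - N F² - t F`. Hence
`t (F^r)' = r (N F^r - N F^{r+1} - t F^r)`, and comparing coefficients expresses `[tⁿ] F^{r+1}`
through `[tⁿ] F^r` and `[tⁿ⁻¹] F^r`. This is exactly the recurrence defining `A_{r+1}^{(N)}`,
so induction on `r` identifies `n! [tⁿ] F^r`, the left-hand side of the theorem, with the
right-hand side.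
-/

open Finset hiding mk
open PowerSeries
open scoped Nat

/-- The polynomials `A_r^{(N)}(i; s)` of Kamano's theorem, realized as functions of `s`.
They satisfy `A_1^{(N)}(0;s) = 1`, vanish for `i ≤ -1` and `i ≥ r`, and obey the recurrence
`A_r^{(N)}(i;s) = ((s-1)/(r-1))·A_{r-1}^{(N)}(i;s-N) + A_{r-1}^{(N)}(i-1;s-N+1)` for `r ≥ 2`. -/
noncomputable def kamanoA (N : ℕ) : ℕ → ℤ → ℚ → ℚ
  | 0, _, _ => 0
  | 1, i, _ => if i = 0 then 1 else 0
  | (r + 2), i, s =>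
      ((s - 1) / ((r : ℚ) + 1)) * kamanoA N (r + 1) i (s - N)
        + kamanoA N (r + 1) (i - 1) (s - N + 1)

namespace PowerSeries

theorem coeff_pow_eq_sum_antidiagonalTuple {R : Type*} [CommSemiring R] (f : R⟦X⟧) (r n : ℕ) :
    coeff n (f ^ r) = ∑ l ∈ Nat.antidiagonalTuple r n, ∏ j, coeff (l j) f := by
  rw [← Fin.prod_const, coeff_prod, finsuppAntidiag, sum_map,
    ← piAntidiag_univ_fin_eq_antidiagonalTuple]
  exact sum_attach _ (fun l : Fin r → ℕ => ∏ j, coeff (l j) f)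

theorem factorial_mul_coeff_pow_mk_div_factorial {K : Type*} [Field K] (b : ℕ → K) (r n : ℕ) :
    (n ! : K) * coeff n ((mk fun k => b k / k !) ^ r)
      = ∑ l ∈ Nat.antidiagonalTuple r n, (n ! / ∏ j, ((l j)! : K)) * ∏ j, b (l j) := by
  simp only [coeff_pow_eq_sum_antidiagonalTuple, coeff_mk, mul_sum, prod_div_distrib]
  exact sum_congr rfl fun l _ => by ring

theorem X_mul_derivative_X_pow {R : Type*} [CommSemiring R] (N : ℕ) :
    X * d⁄dX R (X ^ N) = (N : R⟦X⟧) * X ^ N := by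
  rw [derivative_pow, derivative_X]
  rcases N with _ | N
  · simp
  · rw [Nat.add_sub_cancel]
    ring

section CommRing

variable {R : Type*} [CommRing R]

theorem X_mul_derivative_pow_of_riccati {N : ℕ} {F : R⟦X⟧}
    (hF : X * d⁄dX R F = (N : R⟦X⟧) * F - (N : R⟦X⟧) * F ^ 2 - X * F) (r : ℕ) :
    X * d⁄dX R (F ^ r)
      = (r : R⟦X⟧) * ((N : R⟦X⟧) * F ^ r - (N : R⟦X⟧) * F ^ (r + 1) - X * F ^ r) := by
  rw [derivative_pow]
  rcases r with _ | r
  · simp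
  · rw [Nat.add_sub_cancel]
    push_cast
    linear_combination ((r + 1 : R⟦X⟧) * F ^ r) * hF

theorem succ_mul_coeff_succ_pow_of_riccati {N : ℕ} {F : R⟦X⟧}
    (hF : X * d⁄dX R F = (N : R⟦X⟧) * F - (N : R⟦X⟧) * F ^ 2 - X * F) (r m : ℕ) :
    (m + 1 : R) * coeff (m + 1) (F ^ r) = r * (N * coeff (m + 1) (F ^ r)
      - N * coeff (m + 1) (F ^ (r + 1)) - coeff m (F ^ r)) := by
  have h := congrArg (coeff (m + 1)) (X_mul_derivative_pow_of_riccati hF r)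
  rw [← map_natCast (C (R := R)) r, ← map_natCast (C (R := R)) N] at h
  simp only [coeff_succ_X_mul, coeff_derivative, coeff_C_mul, map_sub] at h
  linear_combination h

end CommRing

section ExpTail

variable (K : Type*) [Field K] [CharZero K]

/-- `eᵗ - T_{N-1}(t)`. -/
noncomputable def expTail (N : ℕ) : K⟦X⟧ :=
  exp K - trunc N (exp K)

variable {K}

theorem coeff_expTail (N j : ℕ) :
    coeff j (expTail K N) = if N ≤ j then (j ! : K)⁻¹ else 0 := by
  rw [expTail, map_sub, Polynomial.coeff_coe, coeff_trunc, coeff_exp]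
  split_ifs <;> first | omega | simp

theorem expTail_ne_zero (N : ℕ) : expTail K N ≠ 0 := fun h => by
  simpa [coeff_expTail, N.factorial_ne_zero] using congrArg (coeff N) h

theorem factorial_mul_X_mul_derivative_expTail (N : ℕ) :
    (N ! : K⟦X⟧) * (X * d⁄dX K (expTail K N))
      = (N ! : K⟦X⟧) * (X * expTail K N) + (N : K⟦X⟧) * X ^ N := by
  ext (_ | n)
  · simp [em]
  rw [← map_natCast (C (R := K)) N !, ← map_natCast (C (R := K)) N]
  simp only [map_add, coeff_C_mul, coeff_succ_X_mul, coeff_derivative, coeff_expTail,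
    coeff_X_pow]
  rcases lt_trichotomy (n + 1) N with h | h | h
  · simp [show ¬ N ≤ n + 1 by omega, show ¬ N ≤ n by omega, h.ne]
  · subst h
    have : (n ! : K) ≠ 0 := Nat.cast_ne_zero.2 n.factorial_ne_zero
    simp [Nat.factorial_succ]
    field_simp
  · have : (n ! : K) ≠ 0 := Nat.cast_ne_zero.2 n.factorial_ne_zero
    rw [if_pos (by omega), if_pos (by omega), if_neg h.ne', Nat.factorial_succ]
    push_cast
    field_simp
    ring

theorem X_mul_derivative_eq_of_factorial_mul_mul_expTail {N : ℕ} {F : K⟦X⟧}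
    (hF : (N ! : K⟦X⟧) * (F * expTail K N) = X ^ N) :
    X * d⁄dX K F = (N : K⟦X⟧) * F - (N : K⟦X⟧) * F ^ 2 - X * F := by
  have hD := congrArg (fun G => X * d⁄dX K G) hF
  simp only [X_mul_derivative_X_pow, Derivation.leibniz, Derivation.map_natCast,
    smul_eq_mul] at hD
  have hfac : (N ! : K⟦X⟧) ≠ 0 := fun h => by
    simpa [N.factorial_ne_zero] using congrArg (constantCoeff (R := K)) h
  refine mul_left_cancel₀ (mul_ne_zero hfac (expTail_ne_zero (K := K) N)) ?_
  linear_combination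
    hD - F * factorial_mul_X_mul_derivative_expTail (K := K) N - (N : K⟦X⟧) * (1 - F) * hF

end ExpTail

end PowerSeries

theorem kamanoA_eq_zero (N : ℕ) :
    ∀ (r : ℕ) (i : ℤ) (s : ℚ), i < 0 ∨ r ≤ i → kamanoA N r i s = 0
  | 0, _, _, _ => rfl
  | 1, _, _, h => if_neg (by omega)
  | r + 2, i, s, h => by
    rw [kamanoA, kamanoA_eq_zero N (r + 1) i _ (by omega),
      kamanoA_eq_zero N (r + 1) (i - 1) _ (by omega), mul_zero, add_zero]

/-- With `c k = B_{N,k} / k!`, the right-hand side of the theorem is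
`n! · kamanoSum N c r n / N^(r-1)`. -/
noncomputable def kamanoSum (N : ℕ) (c : ℕ → ℚ) (r n : ℕ) : ℚ :=
  ∑ i ∈ range r,
    kamanoA N r i (1 + (N : ℚ) * ((r : ℚ) - 1) - (n : ℚ)) * (-1) ^ i * c (n - i)

theorem kamanoSum_one (N : ℕ) (c : ℕ → ℚ) (n : ℕ) : kamanoSum N c 1 n = c n := by
  simp [kamanoSum, kamanoA]

theorem kamanoSum_add_two (N : ℕ) (c : ℕ → ℚ) (q m : ℕ) :
    kamanoSum N c (q + 2) (m + 1)
      = (N * (q + 1) - (m + 1)) / (q + 1) * kamanoSum N c (q + 1) (m + 1)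
        - kamanoSum N c (q + 1) m := by
  set s₁ : ℚ := 1 + N * ((q + 1 : ℕ) - 1) - (m + 1 : ℕ)
  set s₀ : ℚ := 1 + N * ((q + 1 : ℕ) - 1) - m
  set a : ℚ := (N * (q + 1) - (m + 1)) / (q + 1)
  have hA (i : ℤ) : kamanoA N (q + 2) i (1 + N * ((q + 2 : ℕ) - 1) - (m + 1 : ℕ))
      = a * kamanoA N (q + 1) i s₁ + kamanoA N (q + 1) (i - 1) s₀ := by
    rw [kamanoA]
    push_cast [s₁, s₀, a]
    ring_nf
  have hS₁ : ∑ i ∈ range (q + 2), kamanoA N (q + 1) i s₁ * (-1) ^ i * c (m + 1 - i)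
      = kamanoSum N c (q + 1) (m + 1) := by
    rw [sum_range_succ, kamanoA_eq_zero N (q + 1) (q + 1 : ℕ) _ (by omega), zero_mul, zero_mul,
      add_zero, kamanoSum]
  have hS₀ : ∑ i ∈ range (q + 2), kamanoA N (q + 1) (i - 1) s₀ * (-1) ^ i * c (m + 1 - i)
      = -kamanoSum N c (q + 1) m := by
    rw [sum_range_succ', Nat.cast_zero, zero_sub, kamanoA_eq_zero N (q + 1) (-1) _ (by omega),
      zero_mul, zero_mul, add_zero, kamanoSum, ← sum_neg_distrib]
    refine sum_congr rfl fun i _ => ?_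
    rw [Nat.cast_succ, add_sub_cancel_right, Nat.succ_sub_succ, pow_succ]
    ring
  calc kamanoSum N c (q + 2) (m + 1)
      = ∑ i ∈ range (q + 2), (a * (kamanoA N (q + 1) i s₁ * (-1) ^ i * c (m + 1 - i))
          + kamanoA N (q + 1) (i - 1) s₀ * (-1) ^ i * c (m + 1 - i)) :=
        sum_congr rfl fun i _ => by rw [hA]; ring
    _ = a * kamanoSum N c (q + 1) (m + 1) - kamanoSum N c (q + 1) m := by
        rw [sum_add_distrib, ← mul_sum, hS₁, hS₀, sub_eq_add_neg]

theorem coeff_pow_succ_eq_kamanoSum {N : ℕ} (hN : 0 < N) {c : ℕ → ℚ}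
    (hF : X * d⁄dX ℚ (mk c)
      = (N : ℚ⟦X⟧) * mk c - (N : ℚ⟦X⟧) * mk c ^ 2 - X * mk c) :
    ∀ q n : ℕ, q ≤ n → coeff n (mk c ^ (q + 1)) = kamanoSum N c (q + 1) n / N ^ q
  | 0, n, _ => by simp [kamanoSum_one]
  | q + 1, 0, h => absurd h (by omega)
  | q + 1, m + 1, h => by
    have ih₁ := coeff_pow_succ_eq_kamanoSum hN hF q (m + 1) (by omega)
    have ih₀ := coeff_pow_succ_eq_kamanoSum hN hF q m (by omega)
    have hrec := succ_mul_coeff_succ_pow_of_riccati hF (q + 1) m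
    rw [ih₁, ih₀] at hrec
    rw [kamanoSum_add_two]
    have : (N : ℚ) ≠ 0 := by positivity
    push_cast at hrec ⊢
    field_simp at hrec ⊢
    linear_combination hrec

theorem factorial_mul_egf_mul_expTail {N : ℕ} {B : ℕ → Polynomial ℚ}
    (hB : ∀ m : ℕ, ∑ k ∈ Finset.range (m + 1),
        (if N ≤ m - k then ((k.factorial * (m - k).factorial : ℚ))⁻¹ • B k else 0)
      = if N ≤ m then ((N.factorial * (m - N).factorial : ℚ))⁻¹ • (Polynomial.X ^ (m - N))
        else 0) :
    (N ! : ℚ⟦X⟧) * (mk (fun k => (B k).eval 0 / k !) * expTail ℚ N) = X ^ N := by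
  ext m
  have h := congrArg (Polynomial.eval 0) (hB m)
  simp only [Polynomial.eval_finsetSum, apply_ite (Polynomial.eval (0 : ℚ)),
    Polynomial.eval_smul, Polynomial.eval_zero, Polynomial.eval_pow, Polynomial.eval_X,
    smul_eq_mul] at h
  rw [← map_natCast (C (R := ℚ)), coeff_C_mul, coeff_mul,
    Nat.sum_antidiagonal_eq_sum_range_succ_mk, coeff_X_pow]
  have hterm : ∀ k ∈ range (m + 1),
      coeff k (mk fun k => (B k).eval 0 / k !) * coeff (m - k) (expTail ℚ N)
        = if N ≤ m - k then ((k ! * (m - k)! : ℚ))⁻¹ * (B k).eval 0 else 0 := by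
    intro k _
    simp only [coeff_mk, coeff_expTail]
    split_ifs
    · field_simp
    · simp
  rw [sum_congr rfl hterm, h]
  rcases lt_trichotomy m N with hm | rfl | hm
  · simp [hm.not_ge, hm.ne]
  · simp [m.factorial_ne_zero]
  · simp [hm.le, hm.ne', Nat.sub_ne_zero_of_lt hm]

/-- Kamano's theorem: sums of products of hypergeometric Bernoulli numbers.
Here `B n` is the hypergeometric Bernoulli polynomial `B_{N,n}(x)` (characterized by the
coefficient relations from its generating function) and the hypergeometric Bernoulli numbers
are `B_{N,n} = B_{N,n}(0)`. -/
theorem sum_products_hypergeometric_bernoulli_numbers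
    (N r : ℕ) (hN : 1 ≤ N) (hr : 1 ≤ r) (n : ℕ) (hn : r - 1 ≤ n)
    (B : ℕ → Polynomial ℚ)
    (hB : ∀ m : ℕ, ∑ k ∈ Finset.range (m + 1),
        (if N ≤ m - k then ((k.factorial * (m - k).factorial : ℚ))⁻¹ • B k else 0)
      = if N ≤ m then ((N.factorial * (m - N).factorial : ℚ))⁻¹ • (Polynomial.X ^ (m - N))
        else 0) :
    ∑ iv ∈ Finset.Nat.antidiagonalTuple r n,
        ((n.factorial : ℚ) / ∏ j, ((iv j).factorial : ℚ)) * ∏ j, (B (iv j)).eval 0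
      = (1 / (N : ℚ) ^ (r - 1)) * ∑ i ∈ Finset.range r,
          kamanoA N r (i : ℤ) (1 + (N : ℚ) * ((r : ℚ) - 1) - (n : ℚ))
            * (-1) ^ i * (n.choose i : ℚ) * (i.factorial : ℚ) * (B (n - i)).eval 0 := by
  obtain ⟨q, rfl⟩ : ∃ q, r = q + 1 := ⟨r - 1, by omega⟩
  have hF := X_mul_derivative_eq_of_factorial_mul_mul_expTail (factorial_mul_egf_mul_expTail hB)
  rw [← factorial_mul_coeff_pow_mk_div_factorial (fun k => (B k).eval 0),
    coeff_pow_succ_eq_kamanoSum hN hF q n (by omega), kamanoSum, Nat.add_sub_cancel, sum_div,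
    mul_sum, mul_sum]
  refine sum_congr rfl fun i hi => ?_
  have hchoose : (n.choose i : ℚ) * i ! * (B (n - i)).eval 0
      = n ! * ((B (n - i)).eval 0 / (n - i)!) := by
    rw [Nat.cast_choose ℚ (by grind)]
    field_simp
  linear_combination
    -(kamanoA N (q + 1) i (1 + N * ((q + 1 : ℕ) - 1) - n) * (-1) ^ i / N ^ q) * hchoose
end

section
/- Let N ≥ 1 and n ≥ 2 be integers, let x₁, x₂, x₃ be rational numbers and set x = x₁ + x₂ + x₃. Then ∑_{i₁,i₂,i₃ ≥ 0, i₁+i₂+i₃ = n} (n!/(i₁! i₂! i₃!)) B_{N,i₁}(x₁) B_{N,i₂}(x₂) B_{N,i₃}(x₃) = (1/(2N²)) [ (N − n)(2N − n) B_{N,n}(x) + n((2N − n)(x − 1) + (x − 2)(N − n + 1)) B_{N,n−1}(x) + n(n−1)(x − 1)(x − 2) B_{N,n−2}(x) ]. -/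
/-!
Write `egf B y = ∑ₖ B_{N,k}(y) tᵏ/k!` and `expTail N = eᵗ − T_{N−1}(t)`. The coefficient relations
say exactly that `egf B y * expTail N = tᴺ e^{yt}/N!`, so `egf B y = egf B 0 * e^{yt}` and the
left-hand side is `n!` times the `tⁿ`-coefficient of `egf B x * (egf B 0)²`. Applying the Euler
operator `θ = t d/dt` to `egf B y * expTail N`, and using `θ (expTail N) = t expTail N + N tᴺ/N!`,
gives the Riccati-type equation `θ b_y = (N + (y − 1)t) b_y − N b_0 b_y` for `b_y = egf B y`.
This equation for `y = x` and `y = 0`, together with its image under `θ`, eliminates `b_0` and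
expresses `2N² b_x b_0²` through `b_x`, `θ b_x`, `θ² b_x` with polynomial coefficients; reading off
the `tⁿ`-coefficients gives the formula.
-/

open Finset

theorem Finset.Nat.sum_antidiagonalTuple_succ {M : Type*} [AddCommMonoid M] (k n : ℕ)
    (F : (Fin (k + 1) → ℕ) → M) :
    ∑ iv ∈ Nat.antidiagonalTuple (k + 1) n, F iv =
      ∑ p ∈ antidiagonal n, ∑ iv ∈ Nat.antidiagonalTuple k p.2, F (Fin.cons p.1 iv) := by
  change (Multiset.map F (↑((List.Nat.antidiagonal n).flatMap fun p =>
      (List.Nat.antidiagonalTuple k p.2).map fun iv => (Fin.cons p.1 iv : Fin (k + 1) → ℕ)))).sum =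
    (Multiset.map (fun p : ℕ × ℕ => (Multiset.map (fun iv => F (Fin.cons p.1 iv))
      (↑(List.Nat.antidiagonalTuple k p.2))).sum) ↑(List.Nat.antidiagonal n)).sum
  simp only [Multiset.map_coe, Multiset.sum_coe, List.flatMap_def, List.map_flatten,
    List.sum_flatten, List.map_map, Function.comp_def]

namespace PowerSeries

variable {R : Type*} [CommSemiring R]

theorem coeff_mul_mul_eq_sum_antidiagonalTuple (f g h : R⟦X⟧) (n : ℕ) :
    coeff n (f * (g * h)) =
      ∑ iv ∈ Finset.Nat.antidiagonalTuple 3 n, coeff (iv 0) f * coeff (iv 1) g * coeff (iv 2) h := by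
  simp only [Finset.Nat.sum_antidiagonalTuple_succ, Finset.Nat.antidiagonalTuple_one,
    sum_singleton, coeff_mul, mul_sum, mul_assoc]
  simp

variable (R) in
noncomputable def eulerOp : Derivation R R⟦X⟧ R⟦X⟧ :=
  (X : R⟦X⟧) • d⁄dX R

theorem eulerOp_apply (f : R⟦X⟧) : eulerOp R f = X * d⁄dX R f := rfl

theorem coeff_eulerOp (f : R⟦X⟧) (n : ℕ) : coeff n (eulerOp R f) = n * coeff n f := by
  cases n with
  | zero => simp [eulerOp_apply]
  | succ n => rw [eulerOp_apply, coeff_succ_X_mul, coeff_derivative, mul_comm]; push_cast; rfl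

theorem eulerOp_X_pow (N : ℕ) : eulerOp R (X ^ N) = C (N : R) * X ^ N := by
  ext k
  rw [coeff_eulerOp, coeff_C_mul, coeff_X_pow]
  split_ifs with h <;> simp [h]

theorem eulerOp_C (a : R) : eulerOp R (C a) = 0 := by simp [eulerOp_apply]

theorem eulerOp_X : eulerOp R X = X := by simp [eulerOp_apply]

theorem eulerOp_rescale_exp {A : Type*} [CommRing A] [Algebra ℚ A] (a : A) :
    eulerOp A (rescale a (exp A)) = C a * (X * rescale a (exp A)) := by
  ext k
  cases k with
  | zero => simp [coeff_eulerOp]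
  | succ k =>
    rw [coeff_eulerOp, coeff_C_mul, coeff_succ_X_mul, coeff_rescale, coeff_rescale, coeff_exp,
      coeff_exp]
    have h : ((k + 1 : ℕ) : A) * algebraMap ℚ A (1 / (k + 1).factorial) =
        algebraMap ℚ A (1 / k.factorial) := by
      rw [← map_natCast (algebraMap ℚ A), ← map_mul, Nat.factorial_succ]
      congr 1
      push_cast
      field_simp
    linear_combination a ^ (k + 1) * h

end PowerSeries

section

open PowerSeries Nat

def IsHypergeometricBernoulli (N : ℕ) (B : ℕ → Polynomial ℚ) : Prop :=
  ∀ m : ℕ, ∑ k ∈ range (m + 1),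
      (if N ≤ m - k then ((k ! * (m - k)! : ℚ))⁻¹ • B k else 0)
    = if N ≤ m then ((N ! * (m - N)! : ℚ))⁻¹ • (Polynomial.X ^ (m - N)) else 0

namespace HypergeometricBernoulli

noncomputable def egf (B : ℕ → Polynomial ℚ) (y : ℚ) : ℚ⟦X⟧ :=
  mk fun k => (B k).eval y / k !

noncomputable def expTail (N : ℕ) : ℚ⟦X⟧ :=
  mk fun k => if N ≤ k then (k ! : ℚ)⁻¹ else 0

@[simp]
theorem coeff_egf (B : ℕ → Polynomial ℚ) (y : ℚ) (k : ℕ) :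
    coeff k (egf B y) = (B k).eval y / k ! :=
  coeff_mk _ _

theorem expTail_ne_zero (N : ℕ) : expTail N ≠ 0 := by
  intro h
  simpa [expTail, factorial_ne_zero] using congrArg (coeff N) h

theorem eulerOp_expTail (N : ℕ) :
    eulerOp ℚ (expTail N) = X * expTail N + C (N : ℚ) * (C (N ! : ℚ)⁻¹ * X ^ N) := by
  ext k
  cases k with
  | zero => rcases N with _ | N <;> simp [coeff_eulerOp, expTail]
  | succ k =>
    rw [coeff_eulerOp, map_add, coeff_succ_X_mul, coeff_C_mul, coeff_C_mul, coeff_X_pow]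
    simp only [expTail, coeff_mk]
    rcases lt_trichotomy N (k + 1) with h | rfl | h
    · rw [if_pos h.le, if_pos (by omega), if_neg h.ne', factorial_succ]
      push_cast
      field_simp
      ring
    · rw [if_pos le_rfl, if_neg (by omega), if_pos rfl]
      ring
    · rw [if_neg (show ¬N ≤ k + 1 by omega), if_neg (show ¬N ≤ k by omega), if_neg h.ne]
      ring

theorem sum_multinomial_mul_eval_eq_factorial_mul_coeff (B : ℕ → Polynomial ℚ) (n : ℕ)
    (x₁ x₂ x₃ : ℚ) :
    ∑ iv ∈ Finset.Nat.antidiagonalTuple 3 n,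
        ((n ! : ℚ) / ((iv 0)! * (iv 1)! * (iv 2)!))
          * (B (iv 0)).eval x₁ * (B (iv 1)).eval x₂ * (B (iv 2)).eval x₃
      = n ! * coeff n (egf B x₁ * (egf B x₂ * egf B x₃)) := by
  rw [coeff_mul_mul_eq_sum_antidiagonalTuple, mul_sum]
  refine sum_congr rfl fun iv _ => ?_
  simp only [coeff_egf]
  ring

variable {N : ℕ} {B : ℕ → Polynomial ℚ}

theorem egf_mul_expTail (hB : IsHypergeometricBernoulli N B) (y : ℚ) :
    egf B y * expTail N = C (N ! : ℚ)⁻¹ * (X ^ N * rescale y (exp ℚ)) := by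
  ext m
  have h := congrArg (Polynomial.eval y) (hB m)
  simp only [Polynomial.eval_finsetSum, apply_ite (Polynomial.eval y), Polynomial.eval_smul,
    Polynomial.eval_zero, Polynomial.eval_pow, Polynomial.eval_X, smul_eq_mul] at h
  rw [coeff_mul, Finset.Nat.sum_antidiagonal_eq_sum_range_succ_mk, coeff_C_mul,
    coeff_X_pow_mul', coeff_rescale, coeff_exp]
  simp only [coeff_egf, expTail, coeff_mk]
  refine (sum_congr rfl fun k _ => ?_).trans (h.trans ?_)
  · split_ifs
    · rw [mul_inv]; ring
    · rw [mul_zero]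
  · split_ifs
    · rw [mul_inv, Algebra.algebraMap_self, RingHom.id_apply]; ring
    · rw [mul_zero]

theorem egf_zero_mul_expTail (hB : IsHypergeometricBernoulli N B) :
    egf B 0 * expTail N = C (N ! : ℚ)⁻¹ * X ^ N := by
  rw [egf_mul_expTail hB, rescale_zero, RingHom.comp_apply, constantCoeff_exp, map_one, mul_one]

theorem egf_eq_egf_zero_mul_exp (hB : IsHypergeometricBernoulli N B) (y : ℚ) :
    egf B y = egf B 0 * rescale y (exp ℚ) := by
  refine mul_right_cancel₀ (expTail_ne_zero N) ?_
  rw [egf_mul_expTail hB, mul_right_comm, egf_zero_mul_expTail hB, mul_assoc]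

theorem egf_mul_egf_mul_egf (hB : IsHypergeometricBernoulli N B) (x₁ x₂ x₃ : ℚ) :
    egf B x₁ * (egf B x₂ * egf B x₃) = egf B (x₁ + x₂ + x₃) * egf B 0 ^ 2 := by
  rw [egf_eq_egf_zero_mul_exp hB x₁, egf_eq_egf_zero_mul_exp hB x₂,
    egf_eq_egf_zero_mul_exp hB x₃, egf_eq_egf_zero_mul_exp hB (x₁ + x₂ + x₃),
    ← exp_mul_exp_eq_exp_add, ← exp_mul_exp_eq_exp_add]
  ring

theorem eulerOp_egf (hB : IsHypergeometricBernoulli N B) (y : ℚ) :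
    eulerOp ℚ (egf B y) =
      (C (N : ℚ) + (C y - 1) * X) * egf B y - C (N : ℚ) * (egf B 0 * egf B y) := by
  refine mul_right_cancel₀ (expTail_ne_zero N) ?_
  have h := congrArg (eulerOp ℚ) (egf_mul_expTail hB y)
  rw [Derivation.leibniz, Derivation.leibniz, Derivation.leibniz, eulerOp_expTail, eulerOp_C,
    eulerOp_X_pow, eulerOp_rescale_exp] at h
  simp only [smul_eq_mul, mul_zero, add_zero] at h
  linear_combination h - (C (N : ℚ) + C y * X) * egf_mul_expTail hB y
    + C (N : ℚ) * egf B y * egf_zero_mul_expTail hB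

theorem egf_mul_egf_zero_sq (hB : IsHypergeometricBernoulli N B) (x : ℚ) :
    C (2 * N ^ 2 : ℚ) * (egf B x * egf B 0 ^ 2) =
      C (2 * N ^ 2 : ℚ) * egf B x
        + C (2 * N * (x - 1) + N * (x - 2) - (x - 1)) * (X * egf B x)
        + C ((x - 1) * (x - 2)) * (X ^ 2 * egf B x)
        - C (3 * N : ℚ) * eulerOp ℚ (egf B x)
        - C (2 * x - 3) * (X * eulerOp ℚ (egf B x))
        + eulerOp ℚ (eulerOp ℚ (egf B x)) := by
  have hx := eulerOp_egf hB x
  have h0 := eulerOp_egf hB 0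
  have hθx := congrArg (eulerOp ℚ) hx
  simp only [map_sub, map_add, Derivation.leibniz, Derivation.map_one_eq_zero, eulerOp_C,
    eulerOp_X, smul_eq_mul, mul_zero, add_zero, map_zero, zero_sub] at hθx h0
  simp only [map_add, map_sub, map_mul, map_pow, map_ofNat, map_one] at hx ⊢
  linear_combination (C (N : ℚ) * egf B 0 + 2 * C (N : ℚ) + (C x - 2) * X) * hx
    + C (N : ℚ) * egf B x * h0 - hθx

theorem factorial_mul_coeff_egf_mul_egf_zero_sq (hB : IsHypergeometricBernoulli N B) (x : ℚ)
    {n : ℕ} (hn : 2 ≤ n) :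
    2 * (N : ℚ) ^ 2 * (n ! * coeff n (egf B x * egf B 0 ^ 2)) =
      ((N : ℚ) - n) * (2 * N - n) * (B n).eval x
        + n * ((2 * N - n) * (x - 1) + (x - 2) * (N - n + 1)) * (B (n - 1)).eval x
        + n * (n - 1) * (x - 1) * (x - 2) * (B (n - 2)).eval x := by
  obtain ⟨m, rfl⟩ : ∃ m, n = m + 2 := ⟨n - 2, by omega⟩
  have h := congrArg (coeff (m + 2)) (egf_mul_egf_zero_sq hB x)
  have coeff_X_mul (f : ℚ⟦X⟧) : coeff (m + 2) (X * f) = coeff (m + 1) f := coeff_succ_X_mul _ f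
  simp only [map_add (coeff (R := ℚ) (m + 2)), map_sub (coeff (R := ℚ) (m + 2)), coeff_C_mul,
    coeff_X_mul, coeff_X_pow_mul, coeff_eulerOp, coeff_egf] at h
  have hfac₁ : ((m + 1)! : ℚ) = (m + 1) * m ! := by push_cast [factorial_succ]; ring
  have hfac₂ : ((m + 2)! : ℚ) = (m + 2) * ((m + 1) * m !) := by push_cast [factorial_succ]; ring
  rw [hfac₁, hfac₂] at h
  rw [hfac₂, show m + 2 - 1 = m + 1 from rfl, show m + 2 - 2 = m from rfl]
  push_cast at h ⊢
  field_simp at h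
  linear_combination h

end HypergeometricBernoulli

end

open HypergeometricBernoulli in
/-- Sums of products of three hypergeometric Bernoulli polynomials, for `n ≥ 2` and
`x = x₁ + x₂ + x₃`.  Here `B n` is the hypergeometric Bernoulli polynomial `B_{N,n}(x)`,
characterized by the coefficient relations coming from its generating function. -/
theorem sum_products_three_hypergeometric_bernoulli_polynomials
    (N n : ℕ) (hN : 1 ≤ N) (hn : 2 ≤ n) (x₁ x₂ x₃ : ℚ)
    (B : ℕ → Polynomial ℚ)
    (hB : ∀ m : ℕ, ∑ k ∈ Finset.range (m + 1),
        (if N ≤ m - k then ((k.factorial * (m - k).factorial : ℚ))⁻¹ • B k else 0)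
      = if N ≤ m then ((N.factorial * (m - N).factorial : ℚ))⁻¹ • (Polynomial.X ^ (m - N))
        else 0) :
    ∑ iv ∈ Finset.Nat.antidiagonalTuple 3 n,
        ((n.factorial : ℚ) / (((iv 0).factorial : ℚ) * ((iv 1).factorial : ℚ)
            * ((iv 2).factorial : ℚ)))
          * (B (iv 0)).eval x₁ * (B (iv 1)).eval x₂ * (B (iv 2)).eval x₃
      = (1 / (2 * (N : ℚ) ^ 2)) *
          (((N : ℚ) - n) * (2 * (N : ℚ) - n) * (B n).eval (x₁ + x₂ + x₃)
            + (n : ℚ) * ((2 * (N : ℚ) - n) * ((x₁ + x₂ + x₃) - 1)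
                + ((x₁ + x₂ + x₃) - 2) * ((N : ℚ) - n + 1)) * (B (n - 1)).eval (x₁ + x₂ + x₃)
            + (n : ℚ) * ((n : ℚ) - 1) * ((x₁ + x₂ + x₃) - 1) * ((x₁ + x₂ + x₃) - 2)
                * (B (n - 2)).eval (x₁ + x₂ + x₃)) := by
  have hB : IsHypergeometricBernoulli N B := hB
  have hN₀ : (N : ℚ) ≠ 0 := Nat.cast_ne_zero.mpr (by omega)
  rw [sum_multinomial_mul_eval_eq_factorial_mul_coeff, egf_mul_egf_mul_egf hB,
    ← factorial_mul_coeff_egf_mul_egf_zero_sq hB _ hn]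
  field_simp
end

section
/- Let r ≥ 1 and n ≥ 1 be integers and let y = B_n^{(r)}(x) ∈ ℚ[x] be the n-th classical higher order Bernoulli polynomial. Then y satisfies the differential equation ∑_{k=2}^{n} (B_k(1)/k!) · y^{(k)}(x) − (x/r − 1/2) · y′(x) + (n/r) · y(x) = 0 as an identity of polynomials in ℚ[x], where B_k(1) denotes the k-th Bernoulli polynomial evaluated at 1. -/
/-!
Let `G(t) = ∑ Bₙ⁽ʳ⁾(x) tⁿ/n!`. Differentiating `G · (eᵗ - 1)ʳ = tʳ e^{xt}` in `x` gives `∂ₓG = tG`,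
i.e. the Appell property `y⁽ᵏ⁾ = n!/(n-k)! · B⁽ʳ⁾ₙ₋ₖ(x)`. Differentiating it in `t` and using
`t eᵗ/(eᵗ - 1) = ∑ Bₖ(1) tᵏ/k!` gives `t ∂ₜG + r (t eᵗ/(eᵗ - 1)) G = (r + x t) G`. Comparing the
coefficients of `tⁿ` in the latter and rewriting them with the former is the differential equation.
-/

open Finset Polynomial PowerSeries

namespace PowerSeries

variable {A : Type*} [CommRing A]

theorem exp_sub_one_eq_mk [Algebra ℚ A] :
    exp A - 1 = mk fun j => if j = 0 then 0 else algebraMap ℚ A (j.factorial : ℚ)⁻¹ := by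
  ext j : 1
  cases j <;> simp [coeff_exp]

theorem rescale_exp_eq_mk [Algebra ℚ A] (x : A) :
    rescale x (exp A) = mk fun m => (m.factorial : ℚ)⁻¹ • x ^ m := by
  ext m : 1
  simp [coeff_exp, Algebra.smul_def, mul_comm]

theorem exp_sub_one_ne_zero [Algebra ℚ A] [Nontrivial A] : exp A - 1 ≠ 0 := by
  intro h
  simpa using congrArg (coeff 1) h

theorem derivative_rescale (a : A) (f : A⟦X⟧) :
    d⁄dX A (rescale a f) = C a * rescale a (d⁄dX A f) := by
  ext n
  simp only [coeff_derivative, coeff_rescale, coeff_C_mul]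
  ring

theorem coeff_X_mul_derivative (f : A⟦X⟧) (n : ℕ) :
    coeff n (X * d⁄dX A f) = n • coeff n f := by
  cases n with
  | zero => simp
  | succ n =>
    rw [coeff_succ_X_mul, coeff_derivative, nsmul_eq_mul]
    push_cast
    ring

theorem coeff_succ_bernoulli'PowerSeries_mul [Algebra ℚ A] (G : A⟦X⟧) (m : ℕ) :
    coeff (m + 1) (bernoulli'PowerSeries A * G) =
      coeff (m + 1) G + algebraMap ℚ A (1 / 2) * coeff m G +
        ∑ k ∈ Icc 2 (m + 1), algebraMap ℚ A (bernoulli' k / k.factorial) * coeff (m + 1 - k) G := by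
  rw [coeff_mul, Nat.sum_antidiagonal_eq_sum_range_succ (fun i j => coeff i _ * coeff j G),
    range_eq_Ico, ← sum_Ico_consecutive _ (Nat.zero_le 2) (by omega : 2 ≤ m + 1 + 1)]
  simp only [Nat.Ico_zero_eq_range, bernoulli'PowerSeries, coeff_mk, sum_range_succ, range_one,
    sum_singleton, bernoulli'_zero, bernoulli'_one, Nat.factorial_zero, Nat.factorial_one,
    Nat.cast_one, div_one, div_self one_ne_zero, map_one, tsub_zero, one_mul, one_div,
    add_tsub_cancel_right, Ico_add_one_right_eq_Icc]

theorem X_mul_derivative_add_bernoulli'PowerSeries_mul [IsDomain A] [Algebra ℚ A]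
    {r : ℕ} (hr : 1 ≤ r) {x : A} {G : A⟦X⟧}
    (hG : G * (exp A - 1) ^ r = X ^ r * rescale x (exp A)) :
    X * d⁄dX A G + r • (bernoulli'PowerSeries A * G) = r • G + C x * X * G := by
  obtain ⟨s, rfl⟩ : ∃ s, r = s + 1 := ⟨r - 1, by omega⟩
  have hD := congrArg (d⁄dX A) hG
  simp only [Derivation.leibniz, Derivation.leibniz_pow, derivative_rescale, derivative_exp,
    map_sub, derivative_one, derivative_X, smul_eq_mul, nsmul_eq_mul, add_tsub_cancel_right,
    sub_zero, mul_one] at hD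
  simp only [nsmul_eq_mul]
  push_cast at hD ⊢
  apply mul_right_cancel₀ (pow_ne_zero (s + 2) (exp_sub_one_ne_zero (A := A)))
  -- `t (eᵗ - 1)` times the `t`-derivative of `hG`, with `t eᵗ = (∑ Bₖ(1) tᵏ/k!) (eᵗ - 1)`
  linear_combination X * (exp A - 1) * hD
    + (s + 1 : A⟦X⟧) * G * (exp A - 1) ^ (s + 1) * bernoulli'PowerSeries_mul_exp_sub_one A
    - ((s + 1 : A⟦X⟧) * (exp A - 1) + C x * X * (exp A - 1)) * hG

variable {R : Type*} [CommRing R]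

noncomputable def mapDerivative (f : R[X]⟦X⟧) : R[X]⟦X⟧ :=
  mk fun n => Polynomial.derivative (coeff n f)

@[simp]
theorem coeff_mapDerivative (f : R[X]⟦X⟧) (n : ℕ) :
    coeff n (mapDerivative f) = Polynomial.derivative (coeff n f) :=
  coeff_mk _ _

theorem mapDerivative_mul_map_C (f : R[X]⟦X⟧) (g : R⟦X⟧) :
    mapDerivative (f * map Polynomial.C g) = mapDerivative f * map Polynomial.C g := by
  ext n
  simp [coeff_mul, coeff_map, Polynomial.derivative_mul]

theorem mapDerivative_rescale_X_exp [Algebra ℚ R] :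
    mapDerivative (rescale Polynomial.X (exp R[X])) = X * rescale Polynomial.X (exp R[X]) := by
  ext n : 1
  cases n with
  | zero => simp
  | succ n =>
    simp only [coeff_mapDerivative, coeff_rescale, coeff_exp, coeff_succ_X_mul,
      ← Algebra.commutes, ← Algebra.smul_def, Polynomial.derivative_smul,
      Polynomial.derivative_X_pow]
    rw [Polynomial.C_mul', Nat.cast_smul_eq_nsmul, ← Nat.cast_smul_eq_nsmul ℚ, smul_smul,
      add_tsub_cancel_right, Nat.factorial_succ]
    congr 1
    push_cast
    field_simp

theorem mapDerivative_eq_X_mul [IsDomain R] [Algebra ℚ R] {r : ℕ} {G : R[X]⟦X⟧}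
    (hG : G * (exp R[X] - 1) ^ r = X ^ r * rescale Polynomial.X (exp R[X])) :
    mapDerivative G = X * G := by
  have hE : (exp R[X] - 1) ^ r = map Polynomial.C ((exp R - 1) ^ r) := by
    rw [map_pow, map_sub, map_one, map_exp]
  have hX : (X : R[X]⟦X⟧) ^ r = map Polynomial.C (X ^ r) := by
    rw [map_pow, map_X]
  have hGE : mapDerivative (G * (exp R[X] - 1) ^ r) = mapDerivative G * (exp R[X] - 1) ^ r := by
    rw [hE, mapDerivative_mul_map_C]
  have hXF : mapDerivative (X ^ r * rescale Polynomial.X (exp R[X])) =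
      X * G * (exp R[X] - 1) ^ r := by
    rw [mul_comm, hX, mapDerivative_mul_map_C, mapDerivative_rescale_X_exp, ← hX, mul_assoc,
      mul_comm _ (X ^ r), ← hG, mul_assoc]
  rw [hG, hXF] at hGE
  exact mul_right_cancel₀ (pow_ne_zero r exp_sub_one_ne_zero) hGE.symm

end PowerSeries

theorem Polynomial.iterate_derivative_eq_of_derivative_succ {R : Type*} [Semiring R]
    {a : ℕ → R[X]} (h : ∀ n, derivative (a (n + 1)) = a n) (n k : ℕ) :
    derivative^[k] (a (n + k)) = a n := by
  induction k with
  | zero => rfl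
  | succ k ih => rw [Function.iterate_succ_apply, ← add_assoc, h, ih]

/-- Lu's theorem: the classical higher order Bernoulli polynomial `y = B_n^{(r)}(x)` satisfies
the differential equation
`(B_n(1)/n!) y⁽ⁿ⁾ + ⋯ + (B_2(1)/2!) y'' - (x/r - 1/2) y' + (n/r) y = 0`,
where `B_k(1)` is the `k`-th Bernoulli polynomial evaluated at `1`.
Here `Br m = B_m^{(r)}(x)` is the family of polynomials whose exponential generating function
`G(t)` satisfies `G(t)·(e^t - 1)^r = t^r · e^{xt}` in `ℚ[x]⟦t⟧`. -/
theorem higher_order_bernoulli_differential_equation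
    (r n : ℕ) (hr : 1 ≤ r) (hn : 1 ≤ n)
    (Br : ℕ → Polynomial ℚ)
    (hBr : PowerSeries.mk (fun m => ((m.factorial : ℚ))⁻¹ • Br m)
          * (PowerSeries.mk (fun j => if j = 0 then 0
              else Polynomial.C ((j.factorial : ℚ))⁻¹)) ^ r
        = (PowerSeries.X : PowerSeries (Polynomial ℚ)) ^ r
            * PowerSeries.mk (fun m => ((m.factorial : ℚ))⁻¹ • (Polynomial.X : Polynomial ℚ) ^ m)) :
    ∑ k ∈ Finset.Icc 2 n, Polynomial.C ((Polynomial.bernoulli k).eval 1 / (k.factorial : ℚ))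
        * (Polynomial.derivative^[k] (Br n))
      - (Polynomial.C ((r : ℚ))⁻¹ * Polynomial.X - Polynomial.C ((1 : ℚ) / 2))
          * Polynomial.derivative (Br n)
      + Polynomial.C ((n : ℚ) / (r : ℚ)) * Br n = 0 := by
  set G : ℚ[X]⟦X⟧ := mk fun m => ((m.factorial : ℚ))⁻¹ • Br m
  have hG : G * (exp ℚ[X] - 1) ^ r = PowerSeries.X ^ r * rescale Polynomial.X (exp ℚ[X]) := by
    rwa [exp_sub_one_eq_mk, Polynomial.algebraMap_eq, rescale_exp_eq_mk]
  have hBr_eq (m : ℕ) : Br m = (m.factorial : ℚ) • PowerSeries.coeff m G := by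
    simp [G, smul_smul, Nat.factorial_ne_zero]
  have hAppell (m : ℕ) :
      Polynomial.derivative (PowerSeries.coeff (m + 1) G) = PowerSeries.coeff m G := by
    simpa [coeff_succ_X_mul] using congrArg (PowerSeries.coeff (m + 1)) (mapDerivative_eq_X_mul hG)
  obtain ⟨m, rfl⟩ : ∃ m, n = m + 1 := ⟨n - 1, by omega⟩
  have hderiv (k : ℕ) (hk : k ≤ m + 1) : Polynomial.derivative^[k] (Br (m + 1)) =
      ((m + 1).factorial : ℚ) • PowerSeries.coeff (m + 1 - k) G := by
    obtain ⟨j, hj⟩ := Nat.exists_eq_add_of_le' hk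
    rw [hBr_eq, Polynomial.iterate_derivative_smul, hj, Nat.add_sub_cancel,
      iterate_derivative_eq_of_derivative_succ (a := fun n => PowerSeries.coeff n G) hAppell]
  have hcoeff := congrArg (PowerSeries.coeff (m + 1))
    (X_mul_derivative_add_bernoulli'PowerSeries_mul hr hG)
  rw [map_add, map_add, coeff_X_mul_derivative] at hcoeff
  rw [sum_congr rfl fun k hk => by rw [hderiv k (mem_Icc.1 hk).2],
    ← Function.iterate_one Polynomial.derivative, hderiv 1 (by omega), hBr_eq (m + 1)]
  simp only [map_nsmul, coeff_succ_bernoulli'PowerSeries_mul, mul_assoc, PowerSeries.coeff_C_mul,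
    coeff_succ_X_mul, bernoulli_eval_one, Polynomial.algebraMap_eq, mul_smul_comm, ← smul_sum,
    sub_mul, Polynomial.C_mul', smul_mul_assoc, add_tsub_cancel_right] at hcoeff ⊢
  have hr0 : (r : ℚ) ≠ 0 := by positivity
  linear_combination (norm := match_scalars <;> field_simp <;> ring)
    (((m + 1).factorial : ℚ) / r) • hcoeff
end

section
/- Let r ≥ 1 and n ≥ 1 be integers. Then the classical higher order Bernoulli polynomials satisfy the recurrence B_{n+1}^{(r)}(x) = (x − r/2) · B_n^{(r)}(x) − r · ∑_{k=0}^{n−1} C(n, k) · (B_{n−k+1}(1)/(n−k+1)) · B_k^{(r)}(x) as an identity of polynomials in ℚ[x], where B_m(1) denotes the m-th Bernoulli polynomial evaluated at 1. -/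
/-!
Write `E = eᵗ - 1`. Since `E = t · (unit)` is a non-zero-divisor, the defining relation says
`G = (t/E)ʳ e^{xt}`, so `G` has logarithmic derivative `x + r (1/t - eᵗ/E)`. As
`t eᵗ / E = ∑ B'ₘ tᵐ/m!` (with `B'₁ = 1/2`), this gives
`G' = (x - r ∑ B'ₘ₊₁/(m+1) · tᵐ/m!) G`, and comparing coefficients of `tⁿ/n!` on both sides,
with the binomial convolution of exponential generating functions, is the recurrence.
-/

open Finset

namespace PowerSeries

variable {A : Type*} [CommRing A] [Algebra ℚ A]

noncomputable def egf (b : ℕ → A) : A⟦X⟧ :=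
  mk fun n => (n.factorial : ℚ)⁻¹ • b n

@[simp]
theorem coeff_egf (b : ℕ → A) (n : ℕ) : coeff n (egf b) = (n.factorial : ℚ)⁻¹ • b n :=
  coeff_mk _ _

theorem egf_injective : Function.Injective (egf : (ℕ → A) → A⟦X⟧) := by
  intro b c h
  funext n
  simpa [Nat.factorial_ne_zero] using congrArg (coeff n) h

theorem egf_add (b c : ℕ → A) : egf b + egf c = egf (b + c) := by
  ext n
  simp [smul_add]

theorem C_mul_egf (a : A) (b : ℕ → A) : C a * egf b = egf fun n => a * b n := by
  ext n
  simp

theorem derivative_egf (b : ℕ → A) : d⁄dX A (egf b) = egf fun n => b (n + 1) := by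
  ext n
  rw [coeff_derivative, coeff_egf, coeff_egf, ← Nat.cast_succ, mul_comm, ← nsmul_eq_mul,
    smul_comm, ← Nat.cast_smul_eq_nsmul ℚ, smul_smul, Nat.factorial_succ]
  congr 1
  push_cast
  field_simp

theorem egf_mul_egf (b c : ℕ → A) :
    egf b * egf c = egf fun n => ∑ k ∈ range (n + 1), (n.choose k : ℚ) • (b k * c (n - k)) := by
  ext n
  rw [coeff_mul,
    Nat.sum_antidiagonal_eq_sum_range_succ (fun i j => coeff i (egf b) * coeff j (egf c)),
    coeff_egf, smul_sum]
  refine sum_congr rfl fun k hk => ?_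
  rw [coeff_egf, coeff_egf, smul_mul_smul_comm, smul_smul,
    Nat.cast_choose ℚ (Nat.lt_succ_iff.mp (mem_range.mp hk))]
  congr 1
  field_simp

theorem mul_derivative_pow {R : Type*} [CommSemiring R] (f : R⟦X⟧) (n : ℕ) :
    f * d⁄dX R (f ^ n) = n * f ^ n * d⁄dX R f := by
  rw [derivative_pow]
  cases n with
  | zero => simp
  | succ n => rw [Nat.add_sub_cancel, pow_succ]; ring

theorem isLeftRegular_exp_sub_one : IsLeftRegular (exp A - 1) := by
  have hE : exp A - 1 = X * mk fun n => coeff (n + 1) (exp A) := by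
    simpa using sub_const_eq_X_mul_shift (exp A)
  rw [hE]
  refine (show IsLeftRegular (X : A⟦X⟧) from X_mul_injective).mul (IsUnit.isRegular ?_).left
  simp [isUnit_iff_constantCoeff]

theorem derivative_egf_pow (x : A) : d⁄dX A (egf (x ^ ·)) = C x * egf (x ^ ·) := by
  rw [derivative_egf, C_mul_egf]
  simp only [pow_succ']

theorem X_mul_egf_bernoulli' :
    X * egf (fun m => -algebraMap ℚ A (bernoulli' (m + 1) / (m + 1)))
      = 1 - bernoulli'PowerSeries A := by
  ext (_ | m)
  · simp [bernoulli'PowerSeries]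
  · rw [coeff_succ_X_mul, coeff_egf, map_sub, coeff_one, if_neg m.succ_ne_zero, zero_sub,
      bernoulli'PowerSeries, coeff_mk, smul_neg, Algebra.smul_def, ← map_mul, Nat.factorial_succ]
    congr 2
    push_cast
    field_simp

theorem X_mul_derivative_of_mul_exp_sub_one_pow {G : A⟦X⟧} {x : A} {r : ℕ}
    (h : G * (exp A - 1) ^ r = X ^ r * egf (x ^ ·)) :
    X * d⁄dX A G = (X * C x + C (r : A) * (1 - bernoulli'PowerSeries A)) * G := by
  have hB := bernoulli'PowerSeries_mul_exp_sub_one A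
  have hd := congrArg (d⁄dX A) h
  simp only [Derivation.leibniz, smul_eq_mul, derivative_egf_pow] at hd
  set E := exp A - 1 with hE
  have hEr : E * d⁄dX A (E ^ r) = C (r : A) * E ^ r * exp A := by
    rw [mul_derivative_pow, hE, map_sub, derivative_exp, derivative_one, sub_zero, map_natCast]
  have hXr : X * d⁄dX A (X ^ r) = C (r : A) * X ^ r := by
    rw [mul_derivative_pow, derivative_X, mul_one, map_natCast]
  apply isLeftRegular_exp_sub_one.pow (r + 1)
  -- differentiate `h`, multiply by `X * E`, and trade `X * exp A` for `B' * E`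
  linear_combination (X * E) * hd - X * G * hEr + E * egf (x ^ ·) * hXr
    + C (r : A) * G * E ^ r * hB - (C (r : A) + X * C x) * E * h

theorem derivative_eq_of_mul_exp_sub_one_pow {G : A⟦X⟧} {x : A} {r : ℕ}
    (h : G * (exp A - 1) ^ r = X ^ r * egf (x ^ ·)) :
    d⁄dX A G
      = (C x + C (r : A) * egf fun m => -algebraMap ℚ A (bernoulli' (m + 1) / (m + 1))) * G := by
  apply X_mul_injective
  have hX := X_mul_derivative_of_mul_exp_sub_one_pow h
  rw [← X_mul_egf_bernoulli'] at hX
  linear_combination hX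

theorem apply_succ_of_egf_mul_exp_sub_one_pow {b : ℕ → A} {x : A} {r : ℕ}
    (h : egf b * (exp A - 1) ^ r = X ^ r * egf (x ^ ·)) (n : ℕ) :
    b (n + 1) = x * b n - ((r : ℚ) / 2) • b n
      - (r : ℚ) • ∑ k ∈ range n,
          ((n.choose k : ℚ) * (bernoulli' (n - k + 1) / ((n : ℚ) - k + 1))) • b k := by
  have hd := derivative_eq_of_mul_exp_sub_one_pow h
  rw [derivative_egf, add_mul, mul_assoc, mul_comm (egf _) (egf b), egf_mul_egf, C_mul_egf,
    C_mul_egf, egf_add] at hd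
  have hcoeff := congrFun (egf_injective hd) n
  simp only [Pi.add_apply] at hcoeff
  have hterm : ∀ k ∈ range n,
      (n.choose k : ℚ) • (b k * -algebraMap ℚ A (bernoulli' (n - k + 1) / ((n - k : ℕ) + 1)))
        = -(((n.choose k : ℚ) * (bernoulli' (n - k + 1) / ((n : ℚ) - k + 1))) • b k) := by
    intro k hk
    rw [Nat.cast_sub (mem_range.mp hk).le, mul_neg, mul_comm, ← Algebra.smul_def, smul_neg,
      smul_smul]
  have hlast : b n * -algebraMap ℚ A (bernoulli' (n - n + 1) / ((n - n : ℕ) + 1))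
      = -((1 / 2 : ℚ) • b n) := by
    rw [Nat.sub_self, zero_add, bernoulli'_one, mul_neg, mul_comm, ← Algebra.smul_def]
    norm_num
  rw [hcoeff, sum_range_succ, sum_congr rfl hterm, hlast, Nat.choose_self, Nat.cast_one, one_smul,
    sum_neg_distrib, ← nsmul_eq_mul, ← Nat.cast_smul_eq_nsmul ℚ]
  module

end PowerSeries

open Finset Polynomial PowerSeries

theorem higher_order_bernoulli_recurrence_general
    (r n : ℕ)
    (Br : ℕ → Polynomial ℚ)
    (hBr : PowerSeries.mk (fun m => ((m.factorial : ℚ))⁻¹ • Br m)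
          * (PowerSeries.mk (fun j => if j = 0 then 0
              else Polynomial.C ((j.factorial : ℚ))⁻¹)) ^ r
        = (PowerSeries.X : PowerSeries (Polynomial ℚ)) ^ r
            * PowerSeries.mk (fun m => ((m.factorial : ℚ))⁻¹ • (Polynomial.X : Polynomial ℚ) ^ m)) :
    Br (n + 1)
      = (Polynomial.X - Polynomial.C ((r : ℚ) / 2)) * Br n
        - Polynomial.C (r : ℚ) *
            ∑ k ∈ Finset.range n,
              Polynomial.C ((n.choose k : ℚ)
                  * ((Polynomial.bernoulli (n - k + 1)).eval 1 / ((n : ℚ) - (k : ℚ) + 1)))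
                * Br k := by
  have hexp : (PowerSeries.mk fun j => if j = 0 then 0 else Polynomial.C ((j.factorial : ℚ))⁻¹)
      = PowerSeries.exp ℚ[X] - 1 := by
    ext (_ | j) <;> simp [coeff_exp]
  rw [hexp] at hBr
  rw [apply_succ_of_egf_mul_exp_sub_one_pow hBr n]
  simp only [sub_mul, ← Polynomial.smul_eq_C_mul, bernoulli_eval_one]

/-- Lu's recurrence for the classical higher order Bernoulli polynomials:
`B_{n+1}^{(r)}(x) = (x - r/2)·B_n^{(r)}(x) - r·∑_{k=0}^{n-1} C(n,k)·(B_{n-k+1}(1)/(n-k+1))·B_k^{(r)}(x)`,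
where `B_m(1)` is the `m`-th Bernoulli polynomial evaluated at `1`.
Here `Br m = B_m^{(r)}(x)` is the family of polynomials whose exponential generating function
`G(t)` satisfies `G(t)·(e^t - 1)^r = t^r · e^{xt}` in `ℚ[x]⟦t⟧`. -/
theorem higher_order_bernoulli_recurrence
    (r n : ℕ) (hr : 1 ≤ r) (hn : 1 ≤ n)
    (Br : ℕ → Polynomial ℚ)
    (hBr : PowerSeries.mk (fun m => ((m.factorial : ℚ))⁻¹ • Br m)
          * (PowerSeries.mk (fun j => if j = 0 then 0
              else Polynomial.C ((j.factorial : ℚ))⁻¹)) ^ r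
        = (PowerSeries.X : PowerSeries (Polynomial ℚ)) ^ r
            * PowerSeries.mk (fun m => ((m.factorial : ℚ))⁻¹ • (Polynomial.X : Polynomial ℚ) ^ m)) :
    Br (n + 1)
      = (Polynomial.X - Polynomial.C ((r : ℚ) / 2)) * Br n
        - Polynomial.C (r : ℚ) *
            ∑ k ∈ Finset.range n,
              Polynomial.C ((n.choose k : ℚ)
                  * ((Polynomial.bernoulli (n - k + 1)).eval 1 / ((n : ℚ) - (k : ℚ) + 1)))
                * Br k :=
  higher_order_bernoulli_recurrence_general r n Br hBr
end
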